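/- Fix λ > 0, d₁ > 0, d₂ > 0, a > 0, w_o > 0 and angles θ_i, θ_r with sin θ_i > 0 and sin θ_r > 0. Define for Σ > 0 the functions G₁(Σ) = 4π · (4π Σ² sin θ_r sin θ_i / λ⁴) · g_LS · g_PD and G₂(Σ) = (4π Σ sin θ_i / λ²) · g_LS, where g_LS = 2π w_o²/(4π d₁²) and g_PD = π a²/(4π d₂²). Then for every Σ > 0, G₁(Σ) ≤ G₂(Σ) if and only if Σ ≤ S₁ := λ² d₂²/(π a² sin θ_r), with equality G₁(Σ) = G₂(Σ) if and only if Σ = S₁. -/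

import Mathlib

open Real

/-! The quadratic-regime gain is the linear-regime gain scaled by `Σ / S₁`:
`G₁(Σ) = (Σ / S₁) · G₂(Σ)`. Since `G₂(Σ) > 0`, comparing `G₁` with `G₂` is comparing `Σ` with `S₁`. -/

lemma div_mul_le_self_iff {x S G : ℝ} (hS : 0 < S) (hG : 0 < G) : x / S * G ≤ G ↔ x ≤ S := by
  rw [mul_le_iff_le_one_left hG, div_le_one hS]

lemma div_mul_eq_self_iff {x S G : ℝ} (hS : S ≠ 0) (hG : G ≠ 0) : x / S * G = G ↔ x = S := by
  rw [mul_eq_right₀ hG, div_eq_one_iff_eq hS]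

theorem boundary_S1 (lam d₁ d₂ a w_o θi θr : ℝ)
    (hlam : 0 < lam) (hd₁ : 0 < d₁) (hd₂ : 0 < d₂) (ha : 0 < a) (hwo : 0 < w_o)
    (hθi : 0 < Real.sin θi) (hθr : 0 < Real.sin θr)
    (g_LS g_PD S₁ : ℝ) (G₁ G₂ : ℝ → ℝ)
    (hgLS : g_LS = 2 * π * w_o ^ 2 / (4 * π * d₁ ^ 2))
    (hgPD : g_PD = π * a ^ 2 / (4 * π * d₂ ^ 2))
    (hG₁ : ∀ Sig, G₁ Sig =
      4 * π * (4 * π * Sig ^ 2 * Real.sin θr * Real.sin θi / lam ^ 4) * g_LS * g_PD)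
    (hG₂ : ∀ Sig, G₂ Sig = 4 * π * Sig * Real.sin θi / lam ^ 2 * g_LS)
    (hS₁ : S₁ = lam ^ 2 * d₂ ^ 2 / (π * a ^ 2 * Real.sin θr)) :
    ∀ Sig : ℝ, 0 < Sig →
      (G₁ Sig ≤ G₂ Sig ↔ Sig ≤ S₁) ∧ (G₁ Sig = G₂ Sig ↔ Sig = S₁) := by
  intro Sig hSig
  have hS₁_pos : 0 < S₁ := by rw [hS₁]; positivity
  have hG₂_pos : 0 < G₂ Sig := by rw [hG₂, hgLS]; positivity
  have hratio : G₁ Sig = Sig / S₁ * G₂ Sig := by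
    rw [hG₁, hG₂, hgLS, hgPD, hS₁]
    field_simp
  rw [hratio]
  exact ⟨div_mul_le_self_iff hS₁_pos hG₂_pos,
    div_mul_eq_self_iff hS₁_pos.ne' hG₂_pos.ne'⟩
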